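/- Let p be a C² probability density on ℝ^d with ‖p‖_∞ = p_max, such that in a neighborhood of the level set {p = t} the gradient of p is nonzero, and let C be a connected component of the closed t-level set L(t) with smooth boundary of positive minimal curvature radius. Let C₋(2ε) denote the connected component of L(t−2ε) containing C. Then there exists a constant D̄ > 0 such that for all sufficiently small ε > 0, μ(C₋(2ε) \ C) ≤ D̄·ε, where μ is the measure with density p. -/

import Mathlib

/-!
Near a point of the level set `{p = t}` the gradient gives a unit direction `u` along which `p`
increases at rate at least `a > 0` on a ball of radius `r`. Two consequences: the superlevel set
`{t ≤ p}` is locally connected there, and the strip `{t - ε ≤ p < t}` is so thin in the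
direction `u` that its translates by the multiples of `(ε / a) • u` are pairwise disjoint; about
`a r / ε` of them fit in the ball, so near such a point the strip has volume `O(ε)`.
By the first, `C` is relatively open in `{t ≤ p}`, so a compact neighbourhood `K` of `C` meets
`{t ≤ p}` only in `C` and `p < t` on the frontier of `K`; hence for small `ε` the component of
`{t - 2ε ≤ p}` containing `C` stays in `K`, and its part outside `C` lies in the strip inside `K`.
By the second and compactness, that strip has volume `O(ε)`, and the density is below `t` on it.
-/

open MeasureTheory Metric Set Filter Topology
open scoped NNReal ENNReal

section

variable {E : Type*} [NormedAddCommGroup E] [NormedSpace ℝ E]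

theorem ContinuousLinearMap.exists_norm_eq_one_and_pos_apply {f : E →L[ℝ] ℝ} (hf : f ≠ 0) :
    ∃ u : E, ‖u‖ = 1 ∧ 0 < f u := by
  obtain ⟨v, hv⟩ := exists_ne_zero hf
  obtain ⟨w, hw⟩ : ∃ w, 0 < f w := by
    rcases hv.lt_or_gt with h | h
    exacts [⟨-v, by simpa using h⟩, ⟨v, h⟩]
  have hw0 : w ≠ 0 := by rintro rfl; simp at hw
  refine ⟨‖w‖⁻¹ • w, norm_smul_inv_norm hw0, ?_⟩
  rw [map_smul, smul_eq_mul]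
  positivity

theorem exists_ball_le_fderiv_apply {p : E → ℝ} {x : E} (hcont : ContinuousAt (fderiv ℝ p) x)
    (hx : fderiv ℝ p x ≠ 0) :
    ∃ u : E, ‖u‖ = 1 ∧ ∃ a > 0, ∃ r > 0, ∀ y ∈ ball x r, a ≤ fderiv ℝ p y u := by
  obtain ⟨u, hu, hpos⟩ := ContinuousLinearMap.exists_norm_eq_one_and_pos_apply hx
  obtain ⟨r, hr, hball⟩ := eventually_nhds_iff_ball.mp <|
    (hcont.clm_apply continuousAt_const).eventually (lt_mem_nhds (half_lt_self hpos))
  exact ⟨u, hu, _, half_pos hpos, r, hr, fun y hy => (hball y hy).le⟩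

theorem Convex.add_mul_le_apply_add_smul {s : Set E} (hs : Convex ℝ s) {p : E → ℝ}
    (hp : Differentiable ℝ p) {u : E} {a : ℝ} (hder : ∀ y ∈ s, a ≤ fderiv ℝ p y u) {x : E}
    {τ : ℝ} (hτ : 0 ≤ τ) (hx : x ∈ s) (hxτ : x + τ • u ∈ s) :
    p x + a * τ ≤ p (x + τ • u) := by
  have hseg : ∀ r ∈ Icc 0 τ, x + r • u ∈ s := by
    rintro r ⟨hr0, hrτ⟩
    rcases hτ.eq_or_lt with rfl | hτ'
    · obtain rfl : r = 0 := le_antisymm hrτ hr0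
      simpa using hx
    · simpa [smul_smul, div_mul_cancel₀ _ hτ'.ne'] using
        hs.add_smul_mem hx hxτ ⟨div_nonneg hr0 hτ, div_le_one_of_le₀ hrτ hτ⟩
  have hderiv : ∀ r : ℝ, HasDerivAt (fun r => p (x + r • u)) (fderiv ℝ p (x + r • u) u) r :=
    fun r => (hp _).hasFDerivAt.comp_hasDerivAt r
      (((hasDerivAt_id r).smul_const u).const_add x |>.congr_deriv (one_smul ℝ u))
  have := (convex_Icc 0 τ).mul_sub_le_image_sub_of_le_deriv
    (fun r _ => (hderiv r).continuousAt.continuousWithinAt)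
    (fun r _ => (hderiv r).differentiableAt.differentiableWithinAt)
    (fun r hr => (hderiv r).deriv ▸ hder _ (hseg r (interior_subset hr)))
    0 ⟨le_rfl, hτ⟩ τ ⟨hτ, le_rfl⟩ hτ
  simp only [sub_zero, zero_smul, add_zero] at this
  linarith

theorem add_mul_le_apply_add_smul_of_mem_ball {p : E → ℝ} (hp : Differentiable ℝ p) {x u : E}
    {a r : ℝ} (hu : ‖u‖ = 1) (hder : ∀ y ∈ ball x r, a ≤ fderiv ℝ p y u) {w : E}
    (hw : w ∈ ball x (r / 2)) {s : ℝ} (hs : s ∈ Icc 0 (r / 2)) :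
    p w + a * s ≤ p (w + s • u) := by
  refine (convex_ball x r).add_mul_le_apply_add_smul hp hder hs.1
    (ball_subset_ball (half_le_self (by linarith [hs.1, hs.2])) hw) ?_
  have := dist_triangle (w + s • u) w x
  rw [dist_self_add_left, norm_smul, hu, mul_one, Real.norm_of_nonneg hs.1] at this
  rw [mem_ball] at hw ⊢
  linarith [hs.2]

theorem eventually_mem_connectedComponentIn_of_le_fderiv_apply {p : E → ℝ}
    (hp : Differentiable ℝ p) {x u : E} {a r t : ℝ} (hu : ‖u‖ = 1) (ha : 0 < a) (hr : 0 < r)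
    (hder : ∀ y ∈ ball x r, a ≤ fderiv ℝ p y u) (hx : t ≤ p x) :
    ∀ᶠ y in 𝓝 x, t ≤ p y → y ∈ connectedComponentIn {z | t ≤ p z} x := by
  set S := {z | t ≤ p z}
  have hr2 : 0 < r / 2 := half_pos hr
  -- A point `y` of `S` near `x` is joined to `x` inside `S` by a staple: up from `x` along `u`,
  -- across to `y + (r / 2) • u`, and down to `y`.
  set up : E → Set E := fun w => (fun s : ℝ => w + s • u) '' Icc 0 (r / 2)
  have hup : ∀ w ∈ ball x (r / 2), t ≤ p w → up w ⊆ S := by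
    rintro w hw hwt _ ⟨s, hs, rfl⟩
    have := add_mul_le_apply_add_smul_of_mem_ball hp hu hder hw hs
    have : 0 ≤ a * s := mul_nonneg ha.le hs.1
    show t ≤ _
    linarith
  have hup_conn : ∀ w, IsPreconnected (up w) := fun w => isPreconnected_Icc.image _ (by fun_prop)
  have hbot : ∀ w, w ∈ up w := fun w => ⟨0, left_mem_Icc.2 hr2.le, by simp⟩
  have htop : ∀ w, w + (r / 2) • u ∈ up w := fun w => ⟨r / 2, right_mem_Icc.2 hr2.le, rfl⟩
  obtain ⟨ρ, hρ, hρp⟩ := eventually_nhds_iff_ball.mp <|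
    hp.continuous.continuousAt.eventually (lt_mem_nhds (show t - a * (r / 2) < p x by
      nlinarith))
  filter_upwards [ball_mem_nhds x (lt_min hρ hr2)] with y hy hyt
  set across := (fun θ : ℝ => x + θ • (y - x) + (r / 2) • u) '' Icc 0 1
  have hacross : across ⊆ S := by
    rintro _ ⟨θ, hθ, rfl⟩
    have hw := (convex_ball x (min ρ (r / 2))).add_smul_sub_mem
      (mem_ball_self (lt_min hρ hr2)) hy hθ
    have h1 := hρp _ (ball_subset_ball (min_le_left _ _) hw)
    have h2 := add_mul_le_apply_add_smul_of_mem_ball hp hu hder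
      (ball_subset_ball (min_le_right _ _) hw) (right_mem_Icc.2 hr2.le)
    show t ≤ _
    linarith
  have hx_across : x + (r / 2) • u ∈ across := ⟨0, left_mem_Icc.2 zero_le_one, by simp⟩
  have hy_across : y + (r / 2) • u ∈ across := ⟨1, right_mem_Icc.2 zero_le_one, by simp⟩
  have hstaple : IsPreconnected (up x ∪ across ∪ up y) :=
    ((hup_conn x).union _ (htop x) hx_across (isPreconnected_Icc.image _ (by fun_prop))).union _
      (Or.inr hy_across) (htop y) (hup_conn y)
  exact hstaple.subset_connectedComponentIn (Or.inl (Or.inl (hbot x)))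
    (union_subset (union_subset (hup x (mem_ball_self hr2) hx) hacross)
      (hup y (ball_subset_ball (min_le_right _ _) hy) hyt))
    (Or.inr (hbot y))

theorem eventually_mem_connectedComponentIn_superlevel {p : E → ℝ} (hp : ContDiff ℝ 1 p)
    {x : E} {t : ℝ} (hx : t ≤ p x) (hgrad : p x = t → fderiv ℝ p x ≠ 0) :
    ∀ᶠ y in 𝓝 x, t ≤ p y → y ∈ connectedComponentIn {z | t ≤ p z} x := by
  rcases hx.eq_or_lt with hxt | hxt
  · obtain ⟨u, hu, a, ha, r, hr, hder⟩ := exists_ball_le_fderiv_apply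
      (hp.continuous_fderiv one_ne_zero).continuousAt (hgrad hxt.symm)
    exact eventually_mem_connectedComponentIn_of_le_fderiv_apply
      (hp.differentiable one_ne_zero) hu ha hr hder hx
  · obtain ⟨r, hr, hball⟩ := eventually_nhds_iff_ball.mp
      (hp.continuous.continuousAt.eventually (lt_mem_nhds hxt))
    filter_upwards [ball_mem_nhds x hr] with y hy _
    exact (convex_ball x r).isPreconnected.subset_connectedComponentIn (mem_ball_self hr)
      (fun z hz => (hball z hz).le) hy

theorem measure_biUnion_range_preimage_add_nsmul {G : Type*} [AddCommGroup G] [MeasurableSpace G]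
    [MeasurableAdd G] (μ : Measure G) [μ.IsAddRightInvariant] {A : Set G} (hA : MeasurableSet A)
    {v : G} (hv : ∀ a ∈ A, ∀ k : ℕ, 0 < k → a + k • v ∉ A) (N : ℕ) :
    μ (⋃ k ∈ Finset.range N, (· + k • v) ⁻¹' A) = N * μ A := by
  rw [measure_biUnion_finset _ fun k _ => hA.preimage (measurable_add_const _)]
  · simp [measure_preimage_add_right]
  · intro i hi j hj hij
    wlog hlt : i < j generalizing i j
    · exact Disjoint.symm (this hj hi hij.symm (hij.lt_or_gt.resolve_left hlt))
    refine Set.disjoint_left.2 fun z hi hj => hv _ hi (j - i) (Nat.sub_pos_of_lt hlt) ?_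
    rwa [add_assoc, ← add_nsmul, Nat.add_sub_cancel' hlt.le]

theorem natCast_floor_mul_measure_ball_inter_preimage_Ico_le [MeasurableSpace E] [BorelSpace E]
    (μ : Measure E) [μ.IsAddRightInvariant] {p : E → ℝ} (hp : Differentiable ℝ p) {x u : E}
    {a r ε : ℝ} (t : ℝ) (hu : ‖u‖ = 1) (ha : 0 < a) (hr : 0 < r)
    (hder : ∀ y ∈ ball x r, a ≤ fderiv ℝ p y u) (hε : 0 < ε) :
    (⌊a * (r / 2) / ε⌋₊ : ℝ≥0∞) * μ (ball x (r / 2) ∩ p ⁻¹' Ico (t - ε) t) ≤ μ (ball x r) := by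
  set ρ := r / 2 with hρ_def
  set A := ball x ρ ∩ p ⁻¹' Ico (t - ε) t
  set τ := ε / a
  set N := ⌊a * ρ / ε⌋₊
  have haτ : a * τ = ε := mul_div_cancel₀ ε ha.ne'
  have hρr : ball x ρ ⊆ ball x r := ball_subset_ball (half_le_self hr.le)
  -- `A` is so thin in the direction `u` that its translates by multiples of `τ • u` are disjoint.
  have hv : ∀ z ∈ A, ∀ k : ℕ, 0 < k → z + k • τ • u ∉ A := by
    rintro z ⟨hz, hz1, -⟩ k hk ⟨hzk, -, hzk2⟩
    rw [← Nat.cast_smul_eq_nsmul ℝ, smul_smul] at hzk hzk2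
    have := (convex_ball x r).add_mul_le_apply_add_smul hp hder (by positivity) (hρr hz) (hρr hzk)
    have hk1 : (1 : ℝ) ≤ k := by exact_mod_cast hk
    have : a * (k * τ) = k * ε := by rw [mul_left_comm, haτ]
    nlinarith
  have hsub : ⋃ k ∈ Finset.range N, (· + k • τ • u) ⁻¹' A ⊆ ball x r := by
    simp only [subset_def, mem_iUnion, Finset.mem_range]
    rintro z ⟨k, hk, hzk, -⟩
    have hkτ : (k : ℝ) * τ ≤ ρ := by
      have := Nat.floor_le (a := a * ρ / ε) (by positivity)
      have : (k : ℝ) ≤ N := by exact_mod_cast hk.le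
      calc (k : ℝ) * τ ≤ (a * ρ / ε) * τ := by gcongr; linarith
        _ = ρ := by rw [div_mul_eq_mul_div, mul_right_comm, haτ, mul_div_cancel_left₀ ρ hε.ne']
    have hzk : dist (z + k • τ • u) x < ρ := hzk
    have hnorm : ‖k • τ • u‖ = k * τ := by
      rw [← Nat.cast_smul_eq_nsmul ℝ, smul_smul, norm_smul, hu, mul_one,
        Real.norm_of_nonneg (by positivity)]
    have := dist_triangle z (z + k • τ • u) x
    rw [dist_self_add_right, hnorm] at this
    rw [mem_ball]
    linarith
  exact (measure_biUnion_range_preimage_add_nsmul μ (measurableSet_ball.inter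
    (hp.continuous.measurable measurableSet_Ico)) hv N).symm.le.trans (measure_mono hsub)

variable [FiniteDimensional ℝ E] [MeasurableSpace E] [BorelSpace E]

theorem exists_measure_ball_inter_preimage_Ico_le (μ : Measure E) [μ.IsAddHaarMeasure]
    {p : E → ℝ} (hp : Differentiable ℝ p) {x u : E} {a r : ℝ} (t : ℝ) (hu : ‖u‖ = 1)
    (ha : 0 < a) (hr : 0 < r) (hder : ∀ y ∈ ball x r, a ≤ fderiv ℝ p y u) :
    ∃ c : ℝ≥0, ∀ᶠ ε in 𝓝[>] 0,
      μ (ball x (r / 2) ∩ p ⁻¹' Ico (t - ε) t) ≤ c * ENNReal.ofReal ε := by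
  set ρ := r / 2
  set B := (μ (ball x r)).toReal
  refine ⟨(2 * B / (a * ρ)).toNNReal, ?_⟩
  filter_upwards [Ioo_mem_nhdsGT (show 0 < a * ρ / 2 by positivity)] with ε ⟨hε, hερ⟩
  set A := ball x ρ ∩ p ⁻¹' Ico (t - ε) t
  set N := ⌊a * ρ / ε⌋₊
  have hAfin : μ A ≠ ∞ := ((measure_mono (inter_subset_left.trans
    (ball_subset_ball (half_le_self hr.le)))).trans_lt measure_ball_lt_top).ne
  have hN : N * (μ A).toReal ≤ B := by
    simpa using ENNReal.toReal_mono measure_ball_lt_top.ne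
      (natCast_floor_mul_measure_ball_inter_preimage_Ico_le μ hp t hu ha hr hder hε)
  have hNlow : a * ρ / (2 * ε) ≤ N := by
    have := Nat.sub_one_lt_floor (a * ρ / ε)
    have : 2 ≤ a * ρ / ε := by rw [le_div_iff₀ hε]; linarith
    have : a * ρ / (2 * ε) = a * ρ / ε / 2 := by field_simp
    linarith
  calc μ A = ENNReal.ofReal (μ A).toReal := (ENNReal.ofReal_toReal hAfin).symm
    _ ≤ ENNReal.ofReal (2 * B / (a * ρ) * ε) := by
      refine ENNReal.ofReal_le_ofReal ?_
      have := mul_le_mul_of_nonneg_right hNlow (ENNReal.toReal_nonneg (a := μ A))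
      rw [div_mul_eq_mul_div, le_div_iff₀ (by positivity)]
      rw [div_mul_eq_mul_div, div_le_iff₀ (by positivity)] at this
      nlinarith
    _ = _ := by rw [ENNReal.ofReal_mul (by positivity)]; rfl

theorem IsCompact.exists_measure_inter_preimage_Ico_le (μ : Measure E) [μ.IsAddHaarMeasure]
    {K : Set E} (hK : IsCompact K) {p : E → ℝ} (hp : ContDiff ℝ 1 p) {t : ℝ}
    (hgrad : ∀ x ∈ K, p x = t → fderiv ℝ p x ≠ 0) :
    ∃ c : ℝ≥0, ∀ᶠ ε in 𝓝[>] 0, μ (K ∩ p ⁻¹' Ico (t - ε) t) ≤ c * ENNReal.ofReal ε := by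
  refine hK.induction_on (p := fun s => ∃ c : ℝ≥0, ∀ᶠ ε in 𝓝[>] (0 : ℝ),
    μ (s ∩ p ⁻¹' Ico (t - ε) t) ≤ c * ENNReal.ofReal ε) ⟨0, by simp⟩ ?_ ?_ ?_
  · rintro s s' hss' ⟨c, hc⟩
    exact ⟨c, hc.mono fun ε h => (measure_mono (inter_subset_inter_left _ hss')).trans h⟩
  · rintro s s' ⟨c, hc⟩ ⟨c', hc'⟩
    refine ⟨c + c', (hc.and hc').mono fun ε ⟨h, h'⟩ => ?_⟩
    rw [union_inter_distrib_right, ENNReal.coe_add, add_mul]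
    exact (measure_union_le _ _).trans (add_le_add h h')
  · intro x hxK
    by_cases hxt : p x = t
    · obtain ⟨u, hu, a, ha, r, hr, hder⟩ := exists_ball_le_fderiv_apply
        (hp.continuous_fderiv one_ne_zero).continuousAt (hgrad x hxK hxt)
      exact ⟨ball x (r / 2), mem_nhdsWithin_of_mem_nhds (ball_mem_nhds x (half_pos hr)),
        exists_measure_ball_inter_preimage_Ico_le μ (hp.differentiable one_ne_zero) t hu ha hr hder⟩
    · -- Away from the level set, the strips eventually miss a neighbourhood of `x`.
      have hη : 0 < |p x - t| := abs_pos.2 (sub_ne_zero.2 hxt)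
      refine ⟨{y | |p x - t| / 2 < |p y - t|}, mem_nhdsWithin_of_mem_nhds <|
        (isOpen_lt continuous_const (by fun_prop)).mem_nhds (half_lt_self hη), 0, ?_⟩
      filter_upwards [Ioo_mem_nhdsGT (half_pos hη)] with ε hε
      refine (measure_mono_null (fun y hy => ?_) measure_empty).le.trans zero_le
      obtain ⟨hy, hy1, hy2⟩ : |p x - t| / 2 < |p y - t| ∧ t - ε ≤ p y ∧ p y < t := hy
      rw [abs_of_neg (sub_neg.2 hy2)] at hy
      linarith [hε.2]

end

theorem IsCompact.exists_cthickening_inter_subset {X : Type*} [PseudoMetricSpace X] {C S : Set X}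
    (hC : IsCompact C) (h : ∀ x ∈ C, ∀ᶠ y in 𝓝 x, y ∈ S → y ∈ C) :
    ∃ δ > 0, cthickening δ C ∩ S ⊆ C := by
  obtain ⟨δ, hδ, hsub⟩ := (hasBasis_nhdsSet_cthickening hC).mem_iff.mp
    (mem_nhdsSet_iff_forall.mpr h : {y | y ∈ S → y ∈ C} ∈ 𝓝ˢ C)
  exact ⟨δ, hδ, fun y hy => hsub hy.1 hy.2⟩

theorem eventually_connectedComponentIn_superlevel_diff_subset {X : Type*} [PseudoMetricSpace X]
    [ProperSpace X] {p : X → ℝ} (hp : Continuous p) {C : Set X} {x₀ : X} {t δ : ℝ}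
    (hC : IsCompact C) (hx₀ : x₀ ∈ C) (hδ : 0 < δ) (hCδ : cthickening δ C ∩ {z | t ≤ p z} ⊆ C) :
    ∀ᶠ ε in 𝓝[>] 0,
      connectedComponentIn {z | t - ε ≤ p z} x₀ \ C ⊆ cthickening δ C ∩ p ⁻¹' Ico (t - ε) t := by
  set V := thickening δ C
  have hCV : C ⊆ V := self_subset_thickening hδ C
  have hclosure : closure V ⊆ cthickening δ C := closure_thickening_subset_cthickening δ C
  have hfrontier : ∀ z ∈ frontier V, p z < t := fun z hz => by
    by_contra! hzt
    rw [isOpen_thickening.frontier_eq] at hz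
    exact hz.2 (hCV (hCδ ⟨hclosure hz.1, hzt⟩))
  have hfc : IsCompact (frontier V) := hC.cthickening.of_isClosed_subset isClosed_frontier
    (frontier_subset_closure.trans hclosure)
  have hsep : ∀ᶠ ε in 𝓝 (0 : ℝ), ∀ z ∈ frontier V, p z + ε < t :=
    hfc.eventually_forall_of_forall_eventually fun z hz =>
      (by fun_prop : Continuous fun q : ℝ × X => p q.2 + q.1).continuousAt.eventually_lt
        continuousAt_const (by simpa using hfrontier z hz)
  filter_upwards [nhdsWithin_le_nhds hsep] with ε hε
  have hTV : connectedComponentIn {z | t - ε ≤ p z} x₀ ⊆ V := by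
    by_cases hx₀T : t - ε ≤ p x₀
    · refine isPreconnected_connectedComponentIn.subset_of_closure_inter_subset isOpen_thickening
        ⟨x₀, mem_connectedComponentIn hx₀T, hCV hx₀⟩ fun z ⟨hzV, hzT⟩ => ?_
      by_contra hz
      have h1 := hε z ⟨hzV, by rwa [isOpen_thickening.interior_eq]⟩
      have h2 : t - ε ≤ p z := connectedComponentIn_subset {z | t - ε ≤ p z} x₀ hzT
      linarith
    · rw [connectedComponentIn_eq_empty (F := {z | t - ε ≤ p z}) hx₀T]
      exact empty_subset _
  rintro z ⟨hzT, hzC⟩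
  have hzt : t - ε ≤ p z := connectedComponentIn_subset {z | t - ε ≤ p z} x₀ hzT
  exact ⟨thickening_subset_cthickening δ C (hTV hzT), hzt,
    lt_of_not_ge fun h => hzC (hCδ ⟨thickening_subset_cthickening δ C (hTV hzT), h⟩)⟩

theorem withDensity_apply_le_mul {α : Type*} [MeasurableSpace α] (ν : Measure α)
    {f : α → ℝ≥0∞} {s : Set α} (hs : MeasurableSet s) {c : ℝ≥0∞} (hf : ∀ x ∈ s, f x ≤ c) :
    ν.withDensity f s ≤ c * ν s := by
  rw [withDensity_apply _ hs, ← setLIntegral_const]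
  exact setLIntegral_mono' hs hf

theorem boundary_strip_mass_general (d : ℕ) (p : EuclideanSpace ℝ (Fin d) → ℝ)
    (hsmooth : ContDiff ℝ 2 p)
    (μ : Measure (EuclideanSpace ℝ (Fin d)))
    (hμ : μ = volume.withDensity (fun x => ENNReal.ofReal (p x)))
    (t : ℝ) (ht : 0 < t)
    (hgrad : ∃ U : Set (EuclideanSpace ℝ (Fin d)), IsOpen U ∧
      {x | p x = t} ⊆ U ∧ ∀ x ∈ U, fderiv ℝ p x ≠ 0)
    (L : ℝ → Set (EuclideanSpace ℝ (Fin d)))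
    (hL : ∀ s, L s = closure {x | s ≤ p x})
    (x₀ : EuclideanSpace ℝ (Fin d)) (hx₀ : x₀ ∈ L t)
    (C : Set (EuclideanSpace ℝ (Fin d)))
    (hC : C = connectedComponentIn (L t) x₀) (hcomp : IsCompact C) :
    ∃ D > (0 : ℝ), ∃ ε₀ > (0 : ℝ), ∀ ε : ℝ, 0 < ε → ε < ε₀ →
      (μ (connectedComponentIn (L (t - 2 * ε)) x₀ \ C)).toReal ≤ D * ε := by
  have hp : Continuous p := hsmooth.continuous
  have hp1 : ContDiff ℝ 1 p := hsmooth.of_le one_le_two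
  have hLs : ∀ s, L s = {x | s ≤ p x} := fun s => by
    rw [hL, (isClosed_le continuous_const hp).closure_eq]
  rw [hLs] at hx₀ hC
  obtain ⟨U, -, hUt, hUgrad⟩ := hgrad
  have hCopen : ∀ x ∈ C, ∀ᶠ y in 𝓝 x, y ∈ {z | t ≤ p z} → y ∈ C := fun x hx => by
    rw [hC] at hx ⊢
    rw [connectedComponentIn_eq hx]
    exact eventually_mem_connectedComponentIn_superlevel hp1
      (connectedComponentIn_subset {z | t ≤ p z} x₀ hx)
      fun h => hUgrad x (hUt h)
  obtain ⟨δ, hδ, hCδ⟩ := hcomp.exists_cthickening_inter_subset hCopen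
  obtain ⟨c, hc⟩ := (hcomp.cthickening (r := δ)).exists_measure_inter_preimage_Ico_le volume hp1
    fun x _ hx => hUgrad x (hUt hx)
  have htrap := eventually_connectedComponentIn_superlevel_diff_subset hp hcomp
    (hC ▸ mem_connectedComponentIn hx₀) hδ hCδ
  obtain ⟨ε₀, hε₀, hsmall⟩ := (nhdsGT_basis 0).eventually_iff.mp
    (eventually_nhdsGT_zero_mul_left two_pos (htrap.and hc))
  refine ⟨2 * t * c + 1, by positivity, ε₀, hε₀, fun ε hε hεε₀ => ?_⟩
  obtain ⟨hsub, hvol⟩ := hsmall ⟨hε, hεε₀⟩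
  rw [hLs]
  refine ENNReal.toReal_le_of_le_ofReal (by positivity) ?_
  calc μ (connectedComponentIn {z | t - 2 * ε ≤ p z} x₀ \ C)
      ≤ μ (cthickening δ C ∩ p ⁻¹' Ico (t - 2 * ε) t) := measure_mono hsub
    -- On the strip the density is below `t`.
    _ ≤ ENNReal.ofReal t * volume (cthickening δ C ∩ p ⁻¹' Ico (t - 2 * ε) t) :=
      hμ ▸ withDensity_apply_le_mul _ (isClosed_cthickening.measurableSet.inter
        (hp.measurable measurableSet_Ico)) fun x hx => ENNReal.ofReal_le_ofReal hx.2.2.le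
    _ ≤ ENNReal.ofReal t * (c * ENNReal.ofReal (2 * ε)) := by gcongr
    _ = ENNReal.ofReal (t * (c * (2 * ε))) := by
      rw [ENNReal.ofReal_mul ht.le, ENNReal.ofReal_mul c.coe_nonneg, ENNReal.ofReal_coe_nnreal]
    _ ≤ ENNReal.ofReal ((2 * t * c + 1) * ε) := ENNReal.ofReal_le_ofReal (by nlinarith)

/-- Mass of the boundary strip: let `p` be a `C²` probability density on `ℝ^d` with
`‖p‖_∞ = p_max`, whose gradient does not vanish in a neighborhood of the level set
`{p = t}`, and let `C` be a compact connected component of the level set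
`L(t) = closure {p ≥ t}` whose boundary has positive minimal curvature radius `κ`
(encoded by the unique-nearest-point property). If `C₋(2ε)` denotes the connected
component of `L(t−2ε)` containing `C`, then there is a constant `D̄ > 0` such that
`μ(C₋(2ε) \ C) ≤ D̄·ε` for all sufficiently small `ε > 0`, where `μ` is the measure
with density `p`. -/
theorem boundary_strip_mass (d : ℕ) (p : EuclideanSpace ℝ (Fin d) → ℝ)
    (hsmooth : ContDiff ℝ 2 p) (hnonneg : ∀ x, 0 ≤ p x)
    (pmax : ℝ) (hpmax : ∀ x, p x ≤ pmax)
    (μ : Measure (EuclideanSpace ℝ (Fin d)))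
    (hμ : μ = volume.withDensity (fun x => ENNReal.ofReal (p x)))
    (hprob : IsProbabilityMeasure μ)
    (t : ℝ) (ht : 0 < t)
    (hgrad : ∃ U : Set (EuclideanSpace ℝ (Fin d)), IsOpen U ∧
      {x | p x = t} ⊆ U ∧ ∀ x ∈ U, fderiv ℝ p x ≠ 0)
    (L : ℝ → Set (EuclideanSpace ℝ (Fin d)))
    (hL : ∀ s, L s = closure {x | s ≤ p x})
    (x₀ : EuclideanSpace ℝ (Fin d)) (hx₀ : x₀ ∈ L t)
    (C : Set (EuclideanSpace ℝ (Fin d)))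
    (hC : C = connectedComponentIn (L t) x₀) (hcomp : IsCompact C)
    (κ : ℝ) (hκ : 0 < κ)
    (hreach : ∀ x ∉ C, Metric.infDist x C < κ →
      ∃! y, y ∈ C ∧ dist x y = Metric.infDist x C) :
    ∃ D > (0 : ℝ), ∃ ε₀ > (0 : ℝ), ∀ ε : ℝ, 0 < ε → ε < ε₀ →
      (μ (connectedComponentIn (L (t - 2 * ε)) x₀ \ C)).toReal ≤ D * ε :=
  boundary_strip_mass_general d p hsmooth μ hμ t ht hgrad L hL x₀ hx₀ C hC hcomp
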